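/- arXiv:2104.12153 — 2 statements merged into one kernel-verified Lean document; each statement's English description precedes it below -/
import Mathlib

section
/- Let X be a locally compact Hausdorff space, E a monotone complete and normal partially ordered vector space, and μ a regular Borel measure on X with values in the extended positive cone of E. Then μ is inner regular at every Borel set Δ with μ(Δ) ∈ E: μ(Δ) = sup{μ(K) : K compact, K ⊆ Δ}. -/
/-- A positive, order continuous linear functional. -/
def IsPosOrderContFunctional {E : Type*} [AddCommGroup E] [PartialOrder E] [IsOrderedAddMonoid E] [Module ℝ E]
    (φ : E →ₗ[ℝ] ℝ) : Prop :=
  (∀ x : E, 0 ≤ x → 0 ≤ φ x) ∧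
  ∀ S : Set E, S.Nonempty → DirectedOn (· ≥ ·) S → IsGLB S 0 → IsGLB (φ '' S) 0

/-- `E` is normal: positivity is detected by the positive order continuous functionals. -/
def IsNormalPOVS (E : Type*) [AddCommGroup E] [PartialOrder E] [IsOrderedAddMonoid E] [Module ℝ E] : Prop :=
  ∀ x : E, (∀ φ : E →ₗ[ℝ] ℝ, IsPosOrderContFunctional φ → 0 ≤ φ x) ↔ 0 ≤ x

/-- `E` is monotone complete. -/
def MonotoneComplete (E : Type*) [Preorder E] : Prop :=
  ∀ S : Set E, S.Nonempty → DirectedOn (· ≤ ·) S → BddAbove S → ∃ y, IsLUB S y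

section Measures

variable {X : Type*} [TopologicalSpace X] [MeasurableSpace X] [BorelSpace X]
variable {E : Type*} [AddCommGroup E] [PartialOrder E] [IsOrderedAddMonoid E]

/-- A positive `WithTop E`-valued measure on the Borel σ-algebra of `X`. -/
def IsPosMeasure (μ : Set X → WithTop E) : Prop :=
  μ ∅ = 0 ∧ (∀ Δ : Set X, MeasurableSet Δ → 0 ≤ μ Δ) ∧
  ∀ Δ : ℕ → Set X, (∀ n, MeasurableSet (Δ n)) → Pairwise (Function.onFun Disjoint Δ) →
    IsLUB {y : WithTop E | ∃ N : ℕ, y = ∑ n ∈ Finset.range N, μ (Δ n)} (μ (⋃ n, Δ n))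

def InnerRegularAt (μ : Set X → WithTop E) (Δ : Set X) : Prop :=
  IsLUB {y : WithTop E | ∃ K : Set X, IsCompact K ∧ K ⊆ Δ ∧ y = μ K} (μ Δ)

def OuterRegularAt (μ : Set X → WithTop E) (Δ : Set X) : Prop :=
  IsGLB {y : WithTop E | ∃ V : Set X, IsOpen V ∧ Δ ⊆ V ∧ y = μ V} (μ Δ)

/-- A regular Borel measure: finite on compact sets, inner regular at open sets and
outer regular at all Borel sets. -/
def IsRegularBorel (μ : Set X → WithTop E) : Prop :=
  (∀ K : Set X, IsCompact K → μ K ≠ ⊤) ∧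
  (∀ V : Set X, IsOpen V → InnerRegularAt μ V) ∧
  (∀ Δ : Set X, MeasurableSet Δ → OuterRegularAt μ Δ)

end Measures

/-!
By normality it suffices to test `μ Δ ≤ b` against positive order continuous functionals `φ`,
and order continuity turns the suprema and infima of regularity into `ε`-approximations after
applying `φ`. Take an open `V ⊇ Δ` of finite measure, a compact `K ⊆ V` with `φ (μ K)` close to
`φ (μ V)`, and an open `W` with `V \ Δ ⊆ W ⊆ V` and `φ (μ W)` close to `φ (μ (V \ Δ))`. Then
`K \ W` is a compact subset of `Δ`, and `μ K ≤ μ (K \ W) + μ W` together with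
`μ V = μ Δ + μ (V \ Δ)` shows that `φ (μ (K \ W))` is close to `φ (μ Δ)`.
-/

namespace IsPosOrderContFunctional

variable {E : Type*} [AddCommGroup E] [PartialOrder E] [IsOrderedAddMonoid E] [Module ℝ E]
  {φ : E →ₗ[ℝ] ℝ}

theorem mono (hφ : IsPosOrderContFunctional φ) : Monotone φ := fun x y h => by
  simpa using hφ.1 (y - x) (sub_nonneg.2 h)

theorem exists_lt_add_of_isGLB (hφ : IsPosOrderContFunctional φ) {S : Set E} (hne : S.Nonempty)
    (hdir : DirectedOn (· ≥ ·) S) {a : E} (h : IsGLB S a) {ε : ℝ} (hε : 0 < ε) :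
    ∃ s ∈ S, φ s < φ a + ε := by
  have hT : IsGLB ((· - a) '' S) 0 := by
    refine ⟨?_, fun b hb => ?_⟩
    · rintro _ ⟨x, hx, rfl⟩
      exact sub_nonneg.2 (h.1 hx)
    · have : b + a ∈ lowerBounds S := fun x hx => le_sub_iff_add_le.mp (hb ⟨x, hx, rfl⟩)
      exact add_le_iff_nonpos_left.mp (h.2 this)
  have hTdir : DirectedOn (· ≥ ·) ((· - a) '' S) :=
    hdir.mono_comp fun _ _ hxy => sub_le_sub_right hxy a
  obtain ⟨_, ⟨_, ⟨s, hs, rfl⟩, rfl⟩, -, hlt⟩ :=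
    (hφ.2 _ (hne.image _) hTdir hT).exists_between (show (0 : ℝ) < ε from hε)
  exact ⟨s, hs, by rw [map_sub] at hlt; linarith⟩

theorem exists_sub_lt_of_isLUB (hφ : IsPosOrderContFunctional φ) {S : Set E} (hne : S.Nonempty)
    (hdir : DirectedOn (· ≤ ·) S) {v : E} (h : IsLUB S v) {ε : ℝ} (hε : 0 < ε) :
    ∃ s ∈ S, φ v - ε < φ s := by
  have hneg : IsGLB (-S) (-v) := isLUB_neg'.mp (by simpa using h)
  have hnegdir : DirectedOn (· ≥ ·) (-S) := by
    simpa [Set.image_neg_eq_neg] using hdir.mono_comp (g := Neg.neg) fun _ _ => neg_le_neg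
  obtain ⟨s, hs, hlt⟩ := hφ.exists_lt_add_of_isGLB (by simpa using hne) hnegdir hneg hε
  exact ⟨-s, hs, by rw [map_neg] at hlt ⊢; linarith⟩

end IsPosOrderContFunctional

namespace IsPosMeasure

variable {X : Type*} [MeasurableSpace X]
  {E : Type*} [AddCommGroup E] [PartialOrder E] [IsOrderedAddMonoid E]
  {μ : Set X → WithTop E}

theorem union (hμ : IsPosMeasure μ) {A B : Set X} (hA : MeasurableSet A) (hB : MeasurableSet B)
    (hAB : Disjoint A B) : μ (A ∪ B) = μ A + μ B := by
  classical
  set D : ℕ → Set X := fun n => if n = 0 then A else if n = 1 then B else ∅ with hD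
  have hDmeas : ∀ n, MeasurableSet (D n) := by
    intro n; simp only [hD]; split_ifs <;> simp [hA, hB]
  have hDdisj : Pairwise (Function.onFun Disjoint D) := by
    intro i j hij
    simp only [Function.onFun, hD]
    split_ifs <;> simp_all [hAB.symm]
  have hDunion : ⋃ n, D n = A ∪ B := by
    ext x; simp only [hD, Set.mem_iUnion, Set.mem_union]
    constructor
    · rintro ⟨n, hn⟩; split_ifs at hn <;> simp_all
    · rintro (hx | hx)
      exacts [⟨0, by simpa using hx⟩, ⟨1, by simpa using hx⟩]
  have hsum_eq : ∀ N, ∑ n ∈ Finset.range (2 + N), μ (D n) = μ A + μ B := by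
    intro N
    simp [Finset.sum_range_add, hD, Finset.sum_range_succ, hμ.1,
      show ∀ n : ℕ, 2 + n ≠ 1 by omega]
  have hsum_le : ∀ N, ∑ n ∈ Finset.range N, μ (D n) ≤ μ A + μ B := fun N =>
    hsum_eq N ▸ Finset.sum_le_sum_of_subset_of_nonneg (Finset.range_mono (by omega))
      fun n _ _ => hμ.2.1 _ (hDmeas n)
  have hgreat : IsGreatest {y | ∃ N : ℕ, y = ∑ n ∈ Finset.range N, μ (D n)} (μ A + μ B) :=
    ⟨⟨2, by simpa using (hsum_eq 0).symm⟩, by rintro _ ⟨N, rfl⟩; exact hsum_le N⟩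
  simpa [hDunion] using (hμ.2.2 D hDmeas hDdisj).unique hgreat.isLUB

theorem mono (hμ : IsPosMeasure μ) {A B : Set X} (hA : MeasurableSet A) (hB : MeasurableSet B)
    (hAB : A ⊆ B) : μ A ≤ μ B := by
  rw [← Set.union_sdiff_cancel hAB, hμ.union hA (hB.diff hA) disjoint_sdiff_self_right]
  exact le_add_of_nonneg_right (hμ.2.1 _ (hB.diff hA))

theorem mono_of_eq_coe (hμ : IsPosMeasure μ) {A B : Set X} (hA : MeasurableSet A)
    (hB : MeasurableSet B) (hAB : A ⊆ B) {a b : E} (ha : μ A = a) (hb : μ B = b) : a ≤ b :=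
  WithTop.coe_le_coe.mp (ha ▸ hb ▸ hμ.mono hA hB hAB)

theorem union_le (hμ : IsPosMeasure μ) {A B : Set X} (hA : MeasurableSet A)
    (hB : MeasurableSet B) : μ (A ∪ B) ≤ μ A + μ B := by
  rw [← Set.union_sdiff_self, hμ.union hA (hB.diff hA) disjoint_sdiff_self_right]
  exact add_le_add_right (hμ.mono (hB.diff hA) hB Set.sdiff_subset) _

theorem exists_eq_coe_of_subset (hμ : IsPosMeasure μ) {A B : Set X} (hA : MeasurableSet A)
    (hB : MeasurableSet B) (hAB : A ⊆ B) {b : E} (hb : μ B = b) : ∃ a : E, μ A = a := by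
  obtain ⟨a, ha⟩ := WithTop.ne_top_iff_exists.mp
    (ne_top_of_le_ne_top (hb ▸ WithTop.coe_ne_top) (hμ.mono hA hB hAB))
  exact ⟨a, ha.symm⟩

end IsPosMeasure

namespace IsRegularBorel

variable {X : Type*} [TopologicalSpace X] [MeasurableSpace X] {E : Type*} [PartialOrder E]
  {μ : Set X → WithTop E}

theorem exists_isOpen_superset_ne_top (hreg : IsRegularBorel μ) {A : Set X}
    (hA : MeasurableSet A) (hfin : μ A ≠ ⊤) : ∃ U, IsOpen U ∧ A ⊆ U ∧ μ U ≠ ⊤ := by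
  by_contra! h
  refine hfin (top_le_iff.mp ((hreg.2.2 A hA).2 ?_))
  rintro _ ⟨U, hU, hAU, rfl⟩
  exact (h U hU hAU).ge

variable [BorelSpace X] [AddCommGroup E] [IsOrderedAddMonoid E] [Module ℝ E]
  {φ : E →ₗ[ℝ] ℝ}

theorem exists_isOpen_between_lt_add (hμ : IsPosMeasure μ) (hreg : IsRegularBorel μ)
    (hφ : IsPosOrderContFunctional φ) {A U : Set X} (hA : MeasurableSet A) (hU : IsOpen U)
    (hAU : A ⊆ U) {u : E} (hu : μ U = u) {a : E} (ha : μ A = a) {ε : ℝ} (hε : 0 < ε) :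
    ∃ W, IsOpen W ∧ A ⊆ W ∧ W ⊆ U ∧ ∃ w : E, μ W = w ∧ φ w < φ a + ε := by
  set T := {w : E | ∃ W, IsOpen W ∧ A ⊆ W ∧ W ⊆ U ∧ μ W = w}
  have hdir : DirectedOn (· ≥ ·) T := by
    rintro w₁ ⟨W₁, hW₁, hAW₁, hW₁U, hw₁⟩ w₂ ⟨W₂, hW₂, hAW₂, hW₂U, hw₂⟩
    have hW₁₂ := (hW₁.inter hW₂).measurableSet
    obtain ⟨w, hw⟩ := hμ.exists_eq_coe_of_subset hW₁₂ hU.measurableSet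
      (Set.inter_subset_left.trans hW₁U) hu
    refine ⟨w, ⟨W₁ ∩ W₂, hW₁.inter hW₂, Set.subset_inter hAW₁ hAW₂,
      Set.inter_subset_left.trans hW₁U, hw⟩,
      hμ.mono_of_eq_coe hW₁₂ hW₁.measurableSet Set.inter_subset_left hw hw₁,
      hμ.mono_of_eq_coe hW₁₂ hW₂.measurableSet Set.inter_subset_right hw hw₂⟩
  have hglb : IsGLB T a := by
    refine ⟨?_, fun b hb => ?_⟩
    · rintro _ ⟨W, hW, hAW, -, hw⟩
      exact hμ.mono_of_eq_coe hA hW.measurableSet hAW ha hw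
    · refine WithTop.coe_le_coe.mp (ha ▸ (hreg.2.2 A hA).2 ?_)
      rintro _ ⟨V, hV, hAV, rfl⟩
      have hVU := (hV.inter hU).measurableSet
      obtain ⟨w, hw⟩ := hμ.exists_eq_coe_of_subset hVU hU.measurableSet
        Set.inter_subset_right hu
      calc (b : WithTop E) ≤ w :=
            WithTop.coe_le_coe.mpr (hb ⟨V ∩ U, hV.inter hU, Set.subset_inter hAV hAU,
              Set.inter_subset_right, hw⟩)
        _ = μ (V ∩ U) := hw.symm
        _ ≤ μ V := hμ.mono hVU hV.measurableSet Set.inter_subset_left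
  have hne : T.Nonempty := ⟨u, U, hU, hAU, subset_rfl, hu⟩
  obtain ⟨w, ⟨W, hW, hAW, hWU, hw⟩, hlt⟩ := hφ.exists_lt_add_of_isGLB hne hdir hglb hε
  exact ⟨W, hW, hAW, hWU, w, hw, hlt⟩

variable [T2Space X]

theorem exists_isCompact_subset_sub_lt (hμ : IsPosMeasure μ) (hreg : IsRegularBorel μ)
    (hφ : IsPosOrderContFunctional φ) {V : Set X} (hV : IsOpen V) {v : E} (hv : μ V = v)
    {ε : ℝ} (hε : 0 < ε) : ∃ K, IsCompact K ∧ K ⊆ V ∧ ∃ k : E, μ K = k ∧ φ v - ε < φ k := by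
  set S := {k : E | ∃ K, IsCompact K ∧ K ⊆ V ∧ μ K = k}
  have hdir : DirectedOn (· ≤ ·) S := by
    rintro k₁ ⟨K₁, hK₁, hK₁V, hk₁⟩ k₂ ⟨K₂, hK₂, hK₂V, hk₂⟩
    have hK₁₂ := hK₁.union hK₂
    obtain ⟨k, hk⟩ := WithTop.ne_top_iff_exists.mp (hreg.1 _ hK₁₂)
    refine ⟨k, ⟨K₁ ∪ K₂, hK₁₂, Set.union_subset hK₁V hK₂V, hk.symm⟩,
      hμ.mono_of_eq_coe hK₁.measurableSet hK₁₂.measurableSet Set.subset_union_left hk₁ hk.symm,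
      hμ.mono_of_eq_coe hK₂.measurableSet hK₁₂.measurableSet Set.subset_union_right hk₂ hk.symm⟩
  have hlub : IsLUB S v := by
    refine ⟨?_, fun b hb => ?_⟩
    · rintro _ ⟨K, hK, hKV, hk⟩
      exact hμ.mono_of_eq_coe hK.measurableSet hV.measurableSet hKV hk hv
    · refine WithTop.coe_le_coe.mp (hv ▸ (hreg.2.1 V hV).2 ?_)
      rintro _ ⟨K, hK, hKV, rfl⟩
      obtain ⟨k, hk⟩ := WithTop.ne_top_iff_exists.mp (hreg.1 K hK)
      exact hk ▸ WithTop.coe_le_coe.mpr (hb ⟨K, hK, hKV, hk.symm⟩)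
  have hne : S.Nonempty := ⟨0, ∅, isCompact_empty, Set.empty_subset V, hμ.1⟩
  obtain ⟨k, ⟨K, hK, hKV, hk⟩, hlt⟩ := hφ.exists_sub_lt_of_isLUB hne hdir hlub hε
  exact ⟨K, hK, hKV, k, hk, hlt⟩

theorem exists_isCompact_subset_lt_add (hμ : IsPosMeasure μ) (hreg : IsRegularBorel μ)
    (hφ : IsPosOrderContFunctional φ) {Δ : Set X} (hΔ : MeasurableSet Δ) {d : E}
    (hd : μ Δ = d) {ε : ℝ} (hε : 0 < ε) :
    ∃ K, IsCompact K ∧ K ⊆ Δ ∧ ∃ k : E, μ K = k ∧ φ d < φ k + ε := by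
  obtain ⟨V, hV, hΔV, hVfin⟩ := hreg.exists_isOpen_superset_ne_top hΔ (hd ▸ WithTop.coe_ne_top)
  obtain ⟨v, hv⟩ := WithTop.ne_top_iff_exists.mp hVfin
  obtain ⟨K, hK, hKV, k, hk, hφk⟩ :=
    hreg.exists_isCompact_subset_sub_lt hμ hφ hV hv.symm (half_pos hε)
  have hVΔ : MeasurableSet (V \ Δ) := hV.measurableSet.diff hΔ
  obtain ⟨a, ha⟩ := hμ.exists_eq_coe_of_subset hVΔ hV.measurableSet Set.sdiff_subset hv.symm
  obtain ⟨W, hW, hVΔW, hWV, w, hw, hφw⟩ :=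
    hreg.exists_isOpen_between_lt_add hμ hφ hVΔ hV Set.sdiff_subset hv.symm ha (half_pos hε)
  have hv_eq : v = d + a := WithTop.coe_injective <| by
    rw [hv, WithTop.coe_add, ← hd, ← ha, ← hμ.union hΔ hVΔ disjoint_sdiff_self_right,
      Set.union_sdiff_cancel hΔV]
  have hKWΔ : K \ W ⊆ Δ := fun x hx => by_contra fun hxΔ => hx.2 (hVΔW ⟨hKV hx.1, hxΔ⟩)
  have hKW : IsCompact (K \ W) := hK.diff hW
  obtain ⟨k', hk'⟩ := WithTop.ne_top_iff_exists.mp (hreg.1 _ hKW)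
  have hk_le : k ≤ k' + w := WithTop.coe_le_coe.mp <| by
    calc (k : WithTop E) = μ K := hk.symm
      _ ≤ μ (K \ W ∪ W) := hμ.mono hK.measurableSet (hKW.measurableSet.union hW.measurableSet)
          (by rw [Set.sdiff_union_self]; exact Set.subset_union_left)
      _ ≤ μ (K \ W) + μ W := hμ.union_le hKW.measurableSet hW.measurableSet
      _ = ↑(k' + w) := by rw [← hk', hw, WithTop.coe_add]
  have hφk_le : φ k ≤ φ k' + φ w := by simpa using hφ.mono hk_le
  have hφv : φ v = φ d + φ a := by rw [hv_eq, map_add]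
  exact ⟨K \ W, hKW, hKWΔ, k', hk'.symm, by linarith⟩

end IsRegularBorel

theorem regularBorel_innerRegular_at_finite_borel_sets_general
    {X : Type*} [TopologicalSpace X] [MeasurableSpace X] [BorelSpace X]
    [T2Space X]
    {E : Type*} [AddCommGroup E] [PartialOrder E] [IsOrderedAddMonoid E] [Module ℝ E]
    (hnormal : IsNormalPOVS E)
    (μ : Set X → WithTop E) (hμ : IsPosMeasure μ) (hreg : IsRegularBorel μ)
    (Δ : Set X) (hΔ : MeasurableSet Δ) (hfin : μ Δ ≠ ⊤) :
    InnerRegularAt μ Δ := by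
  refine ⟨?_, fun b hb => ?_⟩
  · rintro _ ⟨K, hK, hKΔ, rfl⟩
    exact hμ.mono hK.measurableSet hΔ hKΔ
  induction b with
  | top => exact le_top
  | coe b =>
    obtain ⟨d, hd⟩ := WithTop.ne_top_iff_exists.mp hfin
    rw [← hd, WithTop.coe_le_coe, ← sub_nonneg, ← hnormal]
    intro φ hφ
    rw [map_sub, sub_nonneg]
    refine le_of_forall_pos_lt_add fun ε hε => ?_
    obtain ⟨K, hK, hKΔ, k, hk, hlt⟩ := hreg.exists_isCompact_subset_lt_add hμ hφ hΔ hd.symm hε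
    have hkb : k ≤ b := WithTop.coe_le_coe.mp (hk ▸ hb ⟨K, hK, hKΔ, rfl⟩)
    linarith [hφ.mono hkb]

/-- Let `X` be a locally compact Hausdorff space, `E` a monotone complete and normal
partially ordered vector space, and `μ` a regular Borel measure with values in the
extended positive cone of `E`. Then `μ` is inner regular at every Borel set of finite
measure. -/
theorem regularBorel_innerRegular_at_finite_borel_sets
    {X : Type*} [TopologicalSpace X] [MeasurableSpace X] [BorelSpace X]
    [LocallyCompactSpace X] [T2Space X]
    {E : Type*} [AddCommGroup E] [PartialOrder E] [IsOrderedAddMonoid E] [Module ℝ E]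
    (hmc : MonotoneComplete E) (hnormal : IsNormalPOVS E)
    (μ : Set X → WithTop E) (hμ : IsPosMeasure μ) (hreg : IsRegularBorel μ)
    (Δ : Set X) (hΔ : MeasurableSet Δ) (hfin : μ Δ ≠ ⊤) :
    InnerRegularAt μ Δ :=
  regularBorel_innerRegular_at_finite_borel_sets_general hnormal μ hμ hreg Δ hΔ hfin
end

section
/- Let X be a locally compact Hausdorff space with Borel σ-algebra B, E a monotone complete and normal partially ordered vector space, and μ : B → E₊ a finite positive measure. For a Borel set Δ, μ is outer regular at Δ if and only if for every positive order continuous functional x′ on E the real measure μ_{x′}(·) = ⟨μ(·), x′⟩ is outer regular at Δ. -/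
/-- A finite positive `E`-valued measure (σ-additive in the order sense). -/
def IsFiniteMeasureVal {X : Type*} [MeasurableSpace X] {E : Type*} [AddCommGroup E] [PartialOrder E] [IsOrderedAddMonoid E]
    (μ : Set X → E) : Prop :=
  μ ∅ = 0 ∧ (∀ Δ : Set X, MeasurableSet Δ → 0 ≤ μ Δ) ∧
  ∀ Δ : ℕ → Set X, (∀ n, MeasurableSet (Δ n)) → Pairwise (Function.onFun Disjoint Δ) →
    IsLUB {y : E | ∃ N : ℕ, y = ∑ n ∈ Finset.range N, μ (Δ n)} (μ (⋃ n, Δ n))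

/-- `μ` is outer regular at `Δ`: `μ Δ` is the infimum of `μ V` over open `V ⊇ Δ`. -/
def OuterRegularAtVal {X : Type*} [TopologicalSpace X] {E : Type*} [Preorder E]
    (μ : Set X → E) (Δ : Set X) : Prop :=
  IsGLB {y : E | ∃ V : Set X, IsOpen V ∧ Δ ⊆ V ∧ y = μ V} (μ Δ)

open Set

section OrderedSpace

variable {X E : Type*} [AddCommGroup E] [PartialOrder E] [IsOrderedAddMonoid E]

theorem MonotoneComplete.exists_isGLB (hmc : MonotoneComplete E) {S : Set E} (hne : S.Nonempty)
    (hdir : DirectedOn (· ≥ ·) S) (hbdd : BddBelow S) : ∃ a, IsGLB S a := by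
  have hdir' : DirectedOn (· ≤ ·) (-S) := fun x hx y hy ↦ by
    obtain ⟨z, hz, hxz, hyz⟩ := hdir _ hx _ hy
    exact ⟨-z, by simpa using hz, le_neg.1 hxz, le_neg.1 hyz⟩
  obtain ⟨y, hy⟩ := hmc (-S) hne.neg hdir' hbdd.neg
  exact ⟨-y, isLUB_neg.1 hy⟩

theorem IsPosOrderContFunctional.isGLB_image [Module ℝ E] {φ : E →ₗ[ℝ] ℝ}
    (hφ : IsPosOrderContFunctional φ) {S : Set E} (hne : S.Nonempty)
    (hdir : DirectedOn (· ≥ ·) S) {a : E} (ha : IsGLB S a) : IsGLB (φ '' S) (φ a) := by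
  have hS : IsGLB (OrderIso.subRight a '' S) 0 := by
    rw [← sub_self a]; exact (OrderIso.subRight a).isGLB_image'.2 ha
  have hdirS : DirectedOn (· ≥ ·) (OrderIso.subRight a '' S) :=
    directedOn_image.2 <| hdir.mono fun _ _ h ↦ sub_le_sub_right h a
  have himage : φ '' (OrderIso.subRight a '' S) = OrderIso.subRight (φ a) '' (φ '' S) := by
    simp only [image_image, OrderIso.subRight_apply, map_sub]
  have h := hφ.2 _ (hne.image _) hdirS hS
  rw [himage, ← sub_self (φ a)] at h
  exact (OrderIso.subRight (φ a)).isGLB_image'.1 h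

theorem IsNormalPOVS.eq_of_forall_apply_eq [Module ℝ E] (hE : IsNormalPOVS E) {x y : E}
    (h : ∀ φ : E →ₗ[ℝ] ℝ, IsPosOrderContFunctional φ → φ x = φ y) : x = y := by
  refine le_antisymm ?_ ?_ <;> rw [← sub_nonneg] <;>
    exact (hE _).1 fun φ hφ ↦ by simp [map_sub, h φ hφ]

section Measure

variable [MeasurableSpace X] {μ : Set X → E}

theorem IsFiniteMeasureVal.mono (hμ : IsFiniteMeasureVal μ) {A B : Set X}
    (hA : MeasurableSet A) (hB : MeasurableSet B) (hAB : A ⊆ B) : μ A ≤ μ B := by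
  classical
  let f : ℕ → Set X := fun n ↦ if n = 0 then A else if n = 1 then B \ A else ∅
  have hf : ∀ n, MeasurableSet (f n) := fun n ↦ by
    simp only [f]; split_ifs
    exacts [hA, hB.diff hA, .empty]
  have hdisj : Pairwise (Function.onFun Disjoint f) := fun i j hij ↦ by
    simp only [Function.onFun, f]
    split_ifs <;> simp_all [disjoint_sdiff_right, disjoint_sdiff_left]
  have hunion : (⋃ n, f n) = B := by
    apply Subset.antisymm
    · refine iUnion_subset fun n ↦ ?_
      simp only [f]; split_ifs
      exacts [hAB, sdiff_subset, empty_subset B]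
    · intro x hx
      by_cases hxA : x ∈ A
      · exact mem_iUnion.2 ⟨0, by simp [f, hxA]⟩
      · exact mem_iUnion.2 ⟨1, by simp [f, hx, hxA]⟩
  have hlub := hμ.2.2 f hf hdisj
  rw [hunion] at hlub
  exact hlub.1 ⟨1, by simp [f]⟩

end Measure

section OpenSupersets

variable [TopologicalSpace X]

def openSupersetValues {F : Type*} (μ : Set X → F) (Δ : Set X) : Set F :=
  {y | ∃ V : Set X, IsOpen V ∧ Δ ⊆ V ∧ y = μ V}

theorem outerRegularAtVal_iff {F : Type*} [Preorder F] {μ : Set X → F} {Δ : Set X} :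
    OuterRegularAtVal μ Δ ↔ IsGLB (openSupersetValues μ Δ) (μ Δ) :=
  Iff.rfl

theorem openSupersetValues_nonempty {F : Type*} (μ : Set X → F) (Δ : Set X) :
    (openSupersetValues μ Δ).Nonempty :=
  ⟨μ univ, univ, isOpen_univ, subset_univ Δ, rfl⟩

theorem openSupersetValues_comp {F G : Type*} (g : F → G) (μ : Set X → F) (Δ : Set X) :
    openSupersetValues (g ∘ μ) Δ = g '' openSupersetValues μ Δ := by
  ext; simp [openSupersetValues, and_assoc, eq_comm]

variable [MeasurableSpace X] [OpensMeasurableSpace X] {μ : Set X → E}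

theorem IsFiniteMeasureVal.directedOn_openSupersetValues (hμ : IsFiniteMeasureVal μ)
    (Δ : Set X) : DirectedOn (· ≥ ·) (openSupersetValues μ Δ) := by
  rintro _ ⟨V, hV, hΔV, rfl⟩ _ ⟨W, hW, hΔW, rfl⟩
  have hVW := (hV.inter hW).measurableSet
  exact ⟨μ (V ∩ W), ⟨V ∩ W, hV.inter hW, subset_inter hΔV hΔW, rfl⟩,
    hμ.mono hVW hV.measurableSet inter_subset_left,
    hμ.mono hVW hW.measurableSet inter_subset_right⟩

theorem IsFiniteMeasureVal.mem_lowerBounds_openSupersetValues (hμ : IsFiniteMeasureVal μ)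
    {Δ : Set X} (hΔ : MeasurableSet Δ) : μ Δ ∈ lowerBounds (openSupersetValues μ Δ) := by
  rintro _ ⟨V, hV, hΔV, rfl⟩
  exact hμ.mono hΔ hV.measurableSet hΔV

end OpenSupersets

end OrderedSpace

theorem outerRegular_iff_functionals_general
    {X : Type*} [TopologicalSpace X] [MeasurableSpace X] [BorelSpace X]
    {E : Type*} [AddCommGroup E] [PartialOrder E] [IsOrderedAddMonoid E] [Module ℝ E]
    (hmc : MonotoneComplete E) (hnormal : IsNormalPOVS E)
    (μ : Set X → E) (hμ : IsFiniteMeasureVal μ)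
    (Δ : Set X) (hΔ : MeasurableSet Δ) :
    OuterRegularAtVal μ Δ ↔
      ∀ φ : E →ₗ[ℝ] ℝ, IsPosOrderContFunctional φ →
        OuterRegularAtVal (fun Γ : Set X => φ (μ Γ)) Δ := by
  have hne := openSupersetValues_nonempty μ Δ
  have hdir := hμ.directedOn_openSupersetValues Δ
  have hφμ : ∀ φ : E →ₗ[ℝ] ℝ, OuterRegularAtVal (fun Γ : Set X => φ (μ Γ)) Δ ↔
      IsGLB (φ '' openSupersetValues μ Δ) (φ (μ Δ)) := fun φ ↦ by
    rw [outerRegularAtVal_iff, ← openSupersetValues_comp]; rfl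
  simp only [hφμ, outerRegularAtVal_iff]
  refine ⟨fun h φ hφ ↦ hφ.isGLB_image hne hdir h, fun h ↦ ?_⟩
  obtain ⟨a, ha⟩ := hmc.exists_isGLB hne hdir ⟨μ Δ, hμ.mem_lowerBounds_openSupersetValues hΔ⟩
  have ha_eq : a = μ Δ := hnormal.eq_of_forall_apply_eq fun φ hφ ↦
    (hφ.isGLB_image hne hdir ha).unique (h φ hφ)
  exact ha_eq ▸ ha

/-- Let `X` be a locally compact Hausdorff space, `E` a monotone complete and normal
partially ordered vector space, and `μ` a finite positive `E`-valued measure on the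
Borel σ-algebra. For a Borel set `Δ`, `μ` is outer regular at `Δ` if and only if for
every positive order continuous functional `x′` the real measure `⟨μ ·, x′⟩` is outer
regular at `Δ`. -/
theorem outerRegular_iff_functionals
    {X : Type*} [TopologicalSpace X] [MeasurableSpace X] [BorelSpace X]
    [LocallyCompactSpace X] [T2Space X]
    {E : Type*} [AddCommGroup E] [PartialOrder E] [IsOrderedAddMonoid E] [Module ℝ E]
    (hmc : MonotoneComplete E) (hnormal : IsNormalPOVS E)
    (μ : Set X → E) (hμ : IsFiniteMeasureVal μ)
    (Δ : Set X) (hΔ : MeasurableSet Δ) :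
    OuterRegularAtVal μ Δ ↔
      ∀ φ : E →ₗ[ℝ] ℝ, IsPosOrderContFunctional φ →
        OuterRegularAtVal (fun Γ : Set X => φ (μ Γ)) Δ :=
  outerRegular_iff_functionals_general hmc hnormal μ hμ Δ hΔ
end
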